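/- There exists an optimal prefix-free decompressor; that is, there is a partial computable function V : List Bool →. List Bool whose domain is prefix-free and such that for every partial computable D : List Bool →. List Bool with prefix-free domain there is a constant c ∈ ℕ with C_V(x) ≤ C_D(x) + c for all binary strings x. -/

import Mathlib

open scoped Classical

/-- Complexity of `x` with respect to decompressor `D`: length of a shortest
`D`-description of `x`, or `⊤` if none exists. -/
noncomputable def Cpx (D : List Bool →. List Bool) (x : List Bool) : ℕ∞ :=
  sInf {n : ℕ∞ | ∃ y : List Bool, x ∈ D y ∧ (y.length : ℕ∞) = n}

/-- A set of strings is prefix-free: no element is a proper prefix of another. -/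
def PrefixFreeSet (S : Set (List Bool)) : Prop :=
  ∀ p ∈ S, ∀ q ∈ S, p <+: q → p = q

/-- `U` is an optimal plain decompressor. -/
def OptimalPlain (U : List Bool →. List Bool) : Prop :=
  Partrec U ∧ ∀ D : List Bool →. List Bool, Partrec D →
    ∃ c : ℕ, ∀ x : List Bool, Cpx U x ≤ Cpx D x + (c : ℕ∞)

/-- `V` is an optimal prefix-free decompressor. -/
def OptimalPrefix (V : List Bool →. List Bool) : Prop :=
  Partrec V ∧ PrefixFreeSet V.Dom ∧
    ∀ D : List Bool →. List Bool, Partrec D → PrefixFreeSet D.Dom →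
      ∃ c : ℕ, ∀ x : List Bool, Cpx V x ≤ Cpx D x + (c : ℕ∞)

/-! Run the `n`-th partial recursive function in stages (`evaln`) and accept a string `y` at
stage `s` only if no other string comparable with `y` (a prefix or an extension) halts by
stage `s`. Accepted strings form a prefix-free set, and when the domain is already prefix-free
every string of it is accepted, so the function is unchanged. The universal machine reads `n`
in unary as `1ⁿ0` and runs the trimmed `n`-th function on the rest of its input, which costs
`n + 1` extra bits. -/

open Nat.Partrec (Code)
open Nat.Partrec.Code Encodable Denumerable

theorem Cpx_le_of_mem {D : List Bool →. List Bool} {x y : List Bool} (h : x ∈ D y) :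
    Cpx D x ≤ y.length :=
  sInf_le ⟨y, h, rfl⟩

theorem Cpx_le_Cpx_add {V D : List Bool →. List Bool} (c : ℕ)
    (h : ∀ x y, x ∈ D y → ∃ y', x ∈ V y' ∧ y'.length ≤ y.length + c) (x : List Bool) :
    Cpx V x ≤ Cpx D x + c := by
  rcases Set.eq_empty_or_nonempty {n : ℕ∞ | ∃ y, x ∈ D y ∧ (y.length : ℕ∞) = n}
    with hS | hS
  · simp [Cpx, hS]
  obtain ⟨y, hxy, hy⟩ := csInf_mem hS
  obtain ⟨y', hxy', hlen⟩ := h x y hxy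
  calc Cpx V x ≤ y'.length := Cpx_le_of_mem hxy'
    _ ≤ y.length + c := by exact_mod_cast hlen
    _ = Cpx D x + c := by rw [Cpx, hy]

section Trim

variable (H : ℕ → List Bool → Prop)

def IsAcceptedAt (s : ℕ) (y : List Bool) : Prop :=
  H s y ∧ ∀ z, H s z → z <+: y ∨ y <+: z → z = y

noncomputable def prefixTrim (D : List Bool →. List Bool) : List Bool →. List Bool := fun y =>
  (Nat.rfind fun s => Part.some (decide (IsAcceptedAt H s y))).bind fun _ => D y

variable {H}

-- Whichever of the two stages is later sees both strings halt.
theorem IsAcceptedAt.eq_of_prefix (hH : Monotone H) {s t : ℕ} {y z : List Bool}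
    (hy : IsAcceptedAt H s y) (hz : IsAcceptedAt H t z) (hyz : y <+: z) : y = z := by
  rcases le_total s t with hst | hts
  · exact hz.2 y (hH hst y hy.1) (Or.inl hyz)
  · exact (hy.2 z (hH hts z hz.1) (Or.inr hyz)).symm

theorem exists_isAcceptedAt_of_dom_prefixTrim {D : List Bool →. List Bool} {y : List Bool}
    (h : (prefixTrim H D y).Dom) : ∃ s, IsAcceptedAt H s y := by
  obtain ⟨s, hs, -⟩ := Part.mem_bind_iff.1 (Part.get_mem h)
  exact ⟨s, of_decide_eq_true (Part.mem_some_iff.1 (Nat.rfind_spec hs)).symm⟩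

theorem prefixFreeSet_dom_prefixTrim (hH : Monotone H) (D : List Bool →. List Bool) :
    PrefixFreeSet (prefixTrim H D).Dom := fun y hy z hz hyz => by
  obtain ⟨s, hs⟩ := exists_isAcceptedAt_of_dom_prefixTrim hy
  obtain ⟨t, ht⟩ := exists_isAcceptedAt_of_dom_prefixTrim hz
  exact hs.eq_of_prefix hH ht hyz

theorem prefixTrim_eq_self {D : List Bool →. List Bool} (hD : ∀ y, (D y).Dom ↔ ∃ s, H s y)
    (hpf : PrefixFreeSet D.Dom) : prefixTrim H D = D := by
  funext y
  refine Part.ext fun x => ⟨fun hx => ?_, fun hx => ?_⟩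
  · obtain ⟨_, -, hx⟩ := Part.mem_bind_iff.1 hx
    exact hx
  · have hy : y ∈ D.Dom := Part.dom_iff_mem.2 ⟨x, hx⟩
    obtain ⟨s, hs⟩ := (hD y).1 hy
    have hacc : IsAcceptedAt H s y := ⟨hs, fun z hz hzy => by
      have hz' : z ∈ D.Dom := (hD z).2 ⟨s, hz⟩
      rcases hzy with hzy | hyz
      · exact hpf z hz' y hy hzy
      · exact (hpf y hy z hz' hyz).symm⟩
    have hdom : (Nat.rfind fun s => Part.some (decide (IsAcceptedAt H s y))).Dom :=
      Nat.rfind_dom.2 ⟨s, Part.mem_some_iff.2 (decide_eq_true hacc).symm, fun _ => trivial⟩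
    exact Part.mem_bind_iff.2 ⟨_, Part.get_mem hdom, hx⟩

end Trim

theorem Partrec.prefixTrim {α : Type*} [Primcodable α] {H : α → ℕ → List Bool → Prop}
    {D : α → List Bool →. List Bool}
    (hH : PrimrecRel fun (p : α × List Bool) s => IsAcceptedAt (H p.1) s p.2)
    (hD : Partrec₂ D) :
    Partrec₂ fun a y => prefixTrim (H a) (D a) y :=
  (Partrec.rfind hH.decide.to_comp.partrec₂).bind
    (hD.comp (Computable.fst.comp Computable.fst) (Computable.snd.comp Computable.fst)).to₂

theorem primrecRel_isPrefix {α : Type*} [Primcodable α] :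
    PrimrecRel fun l₁ l₂ : List α => l₁ <+: l₂ :=
  have h : PrimrecRel fun l₁ l₂ : List α => l₁ = l₂.take l₁.length :=
    Primrec.eq.comp Primrec.fst
      (Primrec.list_take.comp (Primrec.list_length.comp Primrec.fst) Primrec.snd)
  h.of_eq fun _ _ => List.prefix_iff_eq_take.symm

def HaltsBy (c : Code) (s : ℕ) (y : List Bool) : Prop :=
  (evaln s c (encode y)).isSome

-- Outputs that do not decode to a string are read as `[]`; this never happens for the code of
-- a partial recursive `List Bool →. List Bool`.
def Code.decompressor (c : Code) : List Bool →. List Bool := fun y =>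
  (eval c (encode y)).map fun m => (decode m).getD []

theorem haltsBy_mono (c : Code) : Monotone (HaltsBy c) := fun _ _ hst y h => by
  obtain ⟨v, hv⟩ := Option.isSome_iff_exists.1 h
  exact Option.isSome_iff_exists.2 ⟨v, evaln_mono hst hv⟩

theorem HaltsBy.encode_lt {c : Code} {s : ℕ} {y : List Bool} (h : HaltsBy c s y) :
    encode y < s := by
  obtain ⟨v, hv⟩ := Option.isSome_iff_exists.1 h
  exact evaln_bound hv

theorem dom_decompressor_iff (c : Code) (y : List Bool) :
    (Code.decompressor c y).Dom ↔ ∃ s, HaltsBy c s y := by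
  show (eval c (encode y)).Dom ↔ _
  simp only [Part.dom_iff_mem, evaln_complete, HaltsBy, Option.isSome_iff_exists]
  exact ⟨fun ⟨v, s, hv⟩ => ⟨s, v, hv⟩, fun ⟨s, v, hv⟩ => ⟨v, s, hv⟩⟩

theorem exists_decompressor_eq {D : List Bool →. List Bool} (hD : Partrec D) :
    ∃ c : Code, Code.decompressor c = D := by
  obtain ⟨c, hc⟩ := exists_code.1 hD
  refine ⟨c, funext fun y => ?_⟩
  simp [Code.decompressor, hc, Part.map_map, Function.comp_def, Part.map_id']

theorem partrec_decompressor : Partrec₂ Code.decompressor :=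
  eval_part.comp Computable.fst (Computable.encode.comp Computable.snd) |>.map
    ((Primrec.option_getD.comp (Primrec.decode.comp Primrec.snd) (Primrec.const [])).to_comp).to₂

theorem primrecPred_haltsBy :
    PrimrecPred fun p : (Code × ℕ) × List Bool => HaltsBy p.1.1 p.1.2 p.2 :=
  Primrec.primrecPred (p := fun p : (Code × ℕ) × List Bool => HaltsBy p.1.1 p.1.2 p.2)
    ((Primrec.option_isSome.comp (primrec_evaln.comp (Primrec.pair (Primrec.pair
      (Primrec.snd.comp Primrec.fst) (Primrec.fst.comp Primrec.fst))
      (Primrec.encode.comp Primrec.snd)))).of_eq fun _ => by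
        rw [Bool.eq_iff_iff, decide_eq_true_iff]; rfl)

-- A string that halts by stage `s` has code `< s`, which bounds the quantifier over `z`.
theorem isAcceptedAt_haltsBy_iff {c : Code} {s : ℕ} {y : List Bool} :
    IsAcceptedAt (HaltsBy c) s y ↔ HaltsBy c s y ∧
      ∀ z ∈ (List.range s).filterMap (decode (α := List Bool)),
        ¬HaltsBy c s z ∨ ¬(z <+: y ∨ y <+: z) ∨ z = y := by
  refine and_congr_right fun _ => ⟨fun h z _ => ?_, fun h z hz => ?_⟩
  · by_cases hz : HaltsBy c s z <;> by_cases hzy : z <+: y ∨ y <+: z <;> simp_all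
  · have hmem : z ∈ (List.range s).filterMap (decode (α := List Bool)) :=
      List.mem_filterMap.2 ⟨encode z, List.mem_range.2 hz.encode_lt, encodek z⟩
    rcases h z hmem with h | h | h
    · exact absurd hz h
    · exact fun hzy => absurd hzy h
    · exact fun _ => h

theorem primrecRel_isAcceptedAt_haltsBy :
    PrimrecRel fun (p : Code × List Bool) s => IsAcceptedAt (HaltsBy p.1) s p.2 := by
  open Primrec in
  have hz : Primrec fun p : List Bool × (Code × List Bool) × ℕ => p.1 := fst
  have hc : Primrec fun p : List Bool × (Code × List Bool) × ℕ => p.2.1.1 :=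
    fst.comp (fst.comp snd)
  have hy : Primrec fun p : List Bool × (Code × List Bool) × ℕ => p.2.1.2 :=
    snd.comp (fst.comp snd)
  have hs : Primrec fun p : List Bool × (Code × List Bool) × ℕ => p.2.2 := snd.comp snd
  have hR : PrimrecRel fun (z : List Bool) (q : (Code × List Bool) × ℕ) =>
      ¬HaltsBy q.1.1 q.2 z ∨ ¬(z <+: q.1.2 ∨ q.1.2 <+: z) ∨ z = q.1.2 :=
    (primrecPred_haltsBy.comp ((hc.pair hs).pair hz)).not.or
      (((primrecRel_isPrefix.comp hz hy).or (primrecRel_isPrefix.comp hy hz)).not.or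
        (Primrec.eq.comp hz hy))
  have hall := hR.forall_mem_list.comp
    (listFilterMap (list_range.comp snd) (Primrec.decode.comp snd).to₂) Primrec.id
  exact ((primrecPred_haltsBy.comp ((fst.comp fst).pair snd |>.pair (snd.comp fst))).and
    hall).of_eq fun _ => isAcceptedAt_haltsBy_iff.symm

section UnaryDispatch

def splitUnary (w : List Bool) : Option (ℕ × List Bool) :=
  if w.idxOf false < w.length then some (w.idxOf false, w.drop (w.idxOf false + 1)) else none

theorem splitUnary_replicate_append (n : ℕ) (y : List Bool) :
    splitUnary (List.replicate n true ++ false :: y) = some (n, y) := by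
  have hidx : (List.replicate n true ++ false :: y).idxOf false = n := by
    rw [List.idxOf_append_of_notMem (by simp)]
    simp
  have hdrop : (List.replicate n true ++ false :: y).drop (n + 1) = y := by
    simp [List.drop_append]
  simp [splitUnary, hidx, hdrop]

theorem splitUnary_append {w r y : List Bool} {n : ℕ} (h : splitUnary w = some (n, y)) :
    splitUnary (w ++ r) = some (n, y ++ r) := by
  unfold splitUnary at h ⊢
  split_ifs at h with hw
  cases h
  have hidx : (w ++ r).idxOf false = w.idxOf false :=
    List.idxOf_append_of_mem (List.idxOf_lt_length_iff.1 hw)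
  rw [hidx, if_pos (by simp; omega), List.drop_append_of_le_length (by omega)]

theorem primrec_splitUnary : Primrec splitUnary := by
  open Primrec in
  have hidx : Primrec fun w : List Bool => w.idxOf false := list_idxOf.comp (const false) .id
  exact Primrec.ite (nat_lt.comp hidx list_length)
    (option_some.comp (hidx.pair (list_drop.comp (succ.comp hidx) .id))) (const none)

def unaryDispatch (F : ℕ → List Bool →. List Bool) : List Bool →. List Bool := fun w =>
  (splitUnary w : Part (ℕ × List Bool)).bind fun p => F p.1 p.2

variable {F : ℕ → List Bool →. List Bool}

theorem mem_unaryDispatch {n : ℕ} {x y : List Bool} (h : x ∈ F n y) :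
    x ∈ unaryDispatch F (List.replicate n true ++ false :: y) :=
  Part.mem_bind_iff.2 ⟨(n, y), Part.mem_ofOption.2 (splitUnary_replicate_append n y), h⟩

theorem prefixFreeSet_dom_unaryDispatch (hF : ∀ n, PrefixFreeSet (F n).Dom) :
    PrefixFreeSet (unaryDispatch F).Dom := by
  have hsplit : ∀ {w}, w ∈ (unaryDispatch F).Dom →
      ∃ n y, splitUnary w = some (n, y) ∧ y ∈ (F n).Dom := fun hw => by
    obtain ⟨⟨n, y⟩, hp, hy⟩ := Part.mem_bind_iff.1 (Part.get_mem hw)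
    exact ⟨n, y, Part.mem_ofOption.1 hp, Part.dom_iff_mem.2 ⟨_, hy⟩⟩
  rintro w hw _ hw' ⟨r, rfl⟩
  obtain ⟨n, y, hwy, hy⟩ := hsplit hw
  obtain ⟨n', y', hwy', hy'⟩ := hsplit hw'
  rw [splitUnary_append hwy, Option.some_inj, Prod.mk.injEq] at hwy'
  obtain ⟨rfl, rfl⟩ := hwy'
  have hr : r = [] := List.self_eq_append_right.1 (hF n y hy _ hy' (List.prefix_append y r))
  rw [hr, List.append_nil]

theorem Partrec.unaryDispatch (hF : Partrec₂ F) : Partrec (unaryDispatch F) :=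
  (Computable.ofOption primrec_splitUnary.to_comp).bind
    (hF.comp (Computable.fst.comp Computable.snd) (Computable.snd.comp Computable.snd)).to₂

end UnaryDispatch

noncomputable def prefixUniversal : List Bool →. List Bool :=
  unaryDispatch fun n => prefixTrim (HaltsBy (ofNat Code n)) (Code.decompressor (ofNat Code n))

theorem partrec_prefixUniversal : Partrec prefixUniversal :=
  Partrec.unaryDispatch ((Partrec.prefixTrim primrecRel_isAcceptedAt_haltsBy
    partrec_decompressor).comp ((Computable.ofNat Code).comp Computable.fst) Computable.snd)

theorem prefixFreeSet_dom_prefixUniversal : PrefixFreeSet prefixUniversal.Dom :=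
  prefixFreeSet_dom_unaryDispatch fun _ => prefixFreeSet_dom_prefixTrim (haltsBy_mono _) _

/-- there exists an optimal prefix-free decompressor. -/
theorem stmt5 :
    ∃ V : List Bool →. List Bool, Partrec V ∧ PrefixFreeSet V.Dom ∧
      ∀ D : List Bool →. List Bool, Partrec D → PrefixFreeSet D.Dom →
        ∃ c : ℕ, ∀ x : List Bool, Cpx V x ≤ Cpx D x + (c : ℕ∞) := by
  refine ⟨prefixUniversal, partrec_prefixUniversal, prefixFreeSet_dom_prefixUniversal,
    fun D hD hpf => ?_⟩
  obtain ⟨c, rfl⟩ := exists_decompressor_eq hD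
  refine ⟨encode c + 1, Cpx_le_Cpx_add _ fun x y hxy =>
    ⟨List.replicate (encode c) true ++ false :: y, mem_unaryDispatch ?_, by simp; omega⟩⟩
  rwa [ofNat_encode, prefixTrim_eq_self (dom_decompressor_iff c) hpf]
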